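/- arXiv:1201.3310 — 3 statements merged into one kernel-verified Lean document; each statement's English description precedes it below -/
import Mathlib

section
/- In the single-choice process placing n balls into n bins i.u.r., the expected number of balls of height at least y is at most 4n/y!, where the height of a ball is one more than the number of balls already in its bin at insertion time. -/
/-!
Fix a ball `i` and a set `S` of `k` earlier balls. All balls of `S` land in the bin of `i` for at
most `n ^ (n - k)` of the `n ^ n` placements, so a union bound over `S` shows that `i` has at least
`k` earlier balls in its bin for at most `C(i, k) n ^ (n - k)` placements. Summing over `i` by the
hockey-stick identity bounds the expected number of balls of height at least `k + 1` by
`C(n, k + 1) n ^ (n - k) / n ^ n ≤ n / (k + 1)!`.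
-/

open Finset

section Placements

variable {α β : Type*} [Fintype α] [DecidableEq α] [Fintype β] [DecidableEq β]

lemma card_filter_forall_eq_apply_le_pow {S : Finset α} {i : α} (hi : i ∉ S) :
    #{f : α → β | ∀ j ∈ S, f j = f i} ≤ Fintype.card β ^ (Fintype.card α - #S) := by
  have hinj : Set.InjOn (fun (f : α → β) (x : ↥Sᶜ) => f x) {f | ∀ j ∈ S, f j = f i} := by
    intro f hf g hg hfg
    have hcompl (x : α) (hx : x ∉ S) : f x = g x := congrFun hfg ⟨x, mem_compl.2 hx⟩
    funext j
    by_cases hj : j ∈ S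
    · rw [hf j hj, hg j hj, hcompl i hi]
    · exact hcompl j hj
  calc #{f : α → β | ∀ j ∈ S, f j = f i}
      ≤ #(univ : Finset (↥Sᶜ → β)) :=
        card_le_card_of_injOn _ (fun _ _ => mem_coe.2 (mem_univ _)) (by simpa using hinj)
    _ = Fintype.card β ^ (Fintype.card α - #S) := by simp

lemma card_filter_le_choose_mul_pow (T : Finset α) {i : α} (hi : i ∉ T) (k : ℕ) :
    #{f : α → β | k ≤ #{j ∈ T | f j = f i}}
      ≤ (#T).choose k * Fintype.card β ^ (Fintype.card α - k) := by
  have hsub : ({f : α → β | k ≤ #{j ∈ T | f j = f i}} : Finset (α → β))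
      ⊆ (T.powersetCard k).biUnion fun S => {f : α → β | ∀ j ∈ S, f j = f i} := by
    intro f hf
    obtain ⟨S, hST, hS⟩ := exists_subset_card_eq (mem_filter.1 hf).2
    refine mem_biUnion.2 ⟨S, mem_powersetCard.2 ⟨hST.trans (filter_subset _ _), hS⟩, ?_⟩
    exact mem_filter.2 ⟨mem_univ _, fun j hj => (mem_filter.1 (hST hj)).2⟩
  calc _ ≤ ∑ S ∈ T.powersetCard k, #{f : α → β | ∀ j ∈ S, f j = f i} :=
        (card_le_card hsub).trans card_biUnion_le
    _ ≤ ∑ S ∈ T.powersetCard k, Fintype.card β ^ (Fintype.card α - k) := by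
        refine sum_le_sum fun S hS => ?_
        obtain ⟨hST, rfl⟩ := mem_powersetCard.1 hS
        exact card_filter_forall_eq_apply_le_pow fun h => hi (hST h)
    _ = (#T).choose k * Fintype.card β ^ (Fintype.card α - k) := by
        rw [sum_const, card_powersetCard, smul_eq_mul]

end Placements

lemma sum_range_choose_eq_choose_add_one (n k : ℕ) :
    ∑ i ∈ range n, i.choose k = n.choose (k + 1) := by
  induction n with
  | zero => simp
  | succ n ih => rw [sum_range_succ, ih, Nat.choose_succ_succ', add_comm]

lemma choose_add_one_mul_pow_mul_factorial_le (n k : ℕ) :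
    n.choose (k + 1) * n ^ (n - k) * (k + 1).factorial ≤ n * n ^ n := by
  rcases lt_or_ge n (k + 1) with hn | hk
  · simp [Nat.choose_eq_zero_of_lt hn]
  calc n.choose (k + 1) * n ^ (n - k) * (k + 1).factorial
      = n.descFactorial (k + 1) * n ^ (n - k) := by
        rw [Nat.descFactorial_eq_factorial_mul_choose]; ring
    _ ≤ n ^ (k + 1) * n ^ (n - k) := Nat.mul_le_mul_right _ (Nat.descFactorial_le_pow n _)
    _ = n * n ^ n := by rw [← pow_add, ← pow_succ', show k + 1 + (n - k) = n + 1 by omega]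

lemma sum_card_filter_earlier_le_choose_mul_pow (n k : ℕ) :
    ∑ f : Fin n → Fin n, #{i | k ≤ #{j | j < i ∧ f j = f i}}
      ≤ n.choose (k + 1) * n ^ (n - k) := by
  calc ∑ f : Fin n → Fin n, #{i | k ≤ #{j | j < i ∧ f j = f i}}
      = ∑ i : Fin n, #{f : Fin n → Fin n | k ≤ #{j ∈ Iio i | f j = f i}} := by
        have hearlier (f : Fin n → Fin n) (i : Fin n) :
            #{j | j < i ∧ f j = f i} = #{j ∈ Iio i | f j = f i} := by
          congr 1; ext j; simp
        simp only [hearlier, card_filter]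
        exact sum_comm
    _ ≤ ∑ i : Fin n, (i : ℕ).choose k * n ^ (n - k) := sum_le_sum fun i _ => by
        simpa using card_filter_le_choose_mul_pow (β := Fin n) (Iio i) (by simp) k
    _ = n.choose (k + 1) * n ^ (n - k) := by
        rw [← sum_mul, Fin.sum_univ_eq_sum_range (·.choose k), sum_range_choose_eq_choose_add_one]

lemma sum_card_filter_earlier_div_pow_le (n k : ℕ) :
    (∑ f : Fin n → Fin n, (#{i | k ≤ #{j | j < i ∧ f j = f i}} : ℝ)) / (n : ℝ) ^ n
      ≤ n / (k + 1).factorial := by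
  have hcount : (∑ f : Fin n → Fin n, #{i | k ≤ #{j | j < i ∧ f j = f i}}) * (k + 1).factorial
      ≤ n * n ^ n :=
    (Nat.mul_le_mul_right _ (sum_card_filter_earlier_le_choose_mul_pow n k)).trans
      (choose_add_one_mul_pow_mul_factorial_le n k)
  rw [div_le_div_iff₀ (by exact_mod_cast Nat.pow_self_pos) (by positivity)]
  exact_mod_cast hcount

theorem stmt_6_general (n y : ℕ) :
    (∑ f : Fin n → Fin n,
        ((Finset.univ.filter (fun i : Fin n =>
          y ≤ (Finset.univ.filter (fun j : Fin n => j < i ∧ f j = f i)).card + 1)).card : ℝ))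
      / (n : ℝ) ^ n ≤ 4 * (n : ℝ) / (Nat.factorial y : ℝ) := by
  -- also for `y = 0`, where `y - 1` truncates to `0` and both sides hold
  have hheight (c : ℕ) : y ≤ c + 1 ↔ y - 1 ≤ c := by omega
  simp only [hheight]
  calc _ ≤ (n : ℝ) / (y - 1 + 1).factorial := sum_card_filter_earlier_div_pow_le n (y - 1)
    _ ≤ 4 * n / y.factorial := by
      gcongr
      · linarith [n.cast_nonneg (α := ℝ)]
      · omega

/-- Single-choice process: `n` balls are placed sequentially into `n` bins, ball `i`
going into bin `f i` with `f` uniform on `Fin n → Fin n`.  The height of ball `i` is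
one more than the number of earlier balls in its bin.  The expected number of balls of
height at least `y` is at most `4n/y!`. -/
theorem stmt_6 (n y : ℕ) (hy : 1 ≤ y) :
    (∑ f : Fin n → Fin n,
        ((Finset.univ.filter (fun i : Fin n =>
          y ≤ (Finset.univ.filter (fun j : Fin n => j < i ∧ f j = f i)).card + 1)).card : ℝ))
      / (n : ℝ) ^ n ≤ 4 * (n : ℝ) / (Nat.factorial y : ℝ) :=
  stmt_6_general n y
end

section
/- Fix integers 1 ≤ k < d ≤ n and 1 ≤ x ≤ n. In one round of the (k,d)-choice process, the probability that the x-th most loaded bin receives at least one ball equals ∑_{j=1}^{k} C(d, d-k+j)·((x/n)^{d-k+j} - ((x-1)/n)^{d-k+j})·(1 - x/n)^{k-j}. -/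
/-!
Bin `b : Fin n` is light if `x ≤ b`, i.e. it is less loaded than the `x`-th bin `x - 1`. Record
for each sample `g : Fin d → Fin n` the set `s` of draws landing in light bins: the `x`-th bin
receives a ball iff `#s < k` and one of the other draws hits it. For a fixed `s` the draws in `s`
range over the `n - x` light bins and the others over the `x` heavy ones, not all avoiding bin
`x - 1`, which gives `(n - x) ^ #s * (x ^ (d - #s) - (x - 1) ^ (d - #s))` samples. Summing over
the `C(d, m)` sets of size `m = k - j < k` and dividing by `n ^ d` yields the formula.
-/

open Finset

lemma card_piFinset_ite {ι α : Type*} [Fintype ι] [DecidableEq ι] (s : Finset ι)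
    (A B : Finset α) :
    #(Fintype.piFinset fun i => if i ∈ s then A else B) = #A ^ #s * #B ^ #sᶜ := by
  simp only [Fintype.card_piFinset, apply_ite card, prod_ite, prod_const]
  congr <;> ext <;> simp

section
variable {ι α : Type*} [Fintype ι] [DecidableEq ι] [Fintype α] [DecidableEq α]

lemma filter_preimage_eq_eq_piFinset (s : Finset ι) (A : Finset α) :
    ({g : ι → α | ({i | g i ∈ A} : Finset ι) = s} : Finset _) =
      Fintype.piFinset fun i => if i ∈ s then A else Aᶜ := by
  ext g
  simp only [mem_filter, mem_univ, true_and, Fintype.mem_piFinset, Finset.ext_iff]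
  refine forall_congr' fun i => ?_
  split_ifs with h <;> simp [h]

lemma filter_preimage_eq_and_forall_ne_eq_piFinset (s : Finset ι) (A : Finset α) {b : α}
    (hb : b ∉ A) :
    ({g : ι → α | ({i | g i ∈ A} : Finset ι) = s ∧ ∀ i, g i ≠ b} : Finset _) =
      Fintype.piFinset fun i => if i ∈ s then A else Aᶜ.erase b := by
  ext g
  simp only [mem_filter, mem_univ, true_and, Fintype.mem_piFinset, Finset.ext_iff, ← forall_and]
  refine forall_congr' fun i => ?_
  split_ifs with h
  · simpa [h] using fun hg => ne_of_mem_of_not_mem hg hb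
  · simp [h, and_comm]

lemma card_filter_preimage_eq_and_exists_eq (s : Finset ι) (A : Finset α) {b : α}
    (hb : b ∉ A) :
    #{g : ι → α | ({i | g i ∈ A} : Finset ι) = s ∧ ∃ i, g i = b} =
      #A ^ #s * (#Aᶜ ^ #sᶜ - (#Aᶜ - 1) ^ #sᶜ) := by
  have hsplit := card_filter_add_card_filter_not
    (s := {g : ι → α | ({i | g i ∈ A} : Finset ι) = s}) (fun g => ∃ i, g i = b)
  simp only [filter_filter, not_exists] at hsplit
  rw [filter_preimage_eq_and_forall_ne_eq_piFinset s A hb, filter_preimage_eq_eq_piFinset,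
    card_piFinset_ite, card_piFinset_ite, card_erase_of_mem (by simpa)] at hsplit
  rw [Nat.mul_sub]
  omega

lemma card_filter_card_preimage_and_exists_eq (p : ℕ → Prop) [DecidablePred p] (A : Finset α)
    {b : α} (hb : b ∉ A) :
    #{g : ι → α | p #{i | g i ∈ A} ∧ ∃ i, g i = b} =
      ∑ m ∈ range (Fintype.card ι + 1) with p m, (Fintype.card ι).choose m *
        (#A ^ m * (#Aᶜ ^ (Fintype.card ι - m) - (#Aᶜ - 1) ^ (Fintype.card ι - m))) := by
  have hfiber (s : Finset ι) :
      #{g ∈ ({g : ι → α | p #{i | g i ∈ A} ∧ ∃ i, g i = b} : Finset _) |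
          ({i | g i ∈ A} : Finset ι) = s} =
        if p #s then
          #A ^ #s * (#Aᶜ ^ (Fintype.card ι - #s) - (#Aᶜ - 1) ^ (Fintype.card ι - #s))
        else 0 := by
    rw [← card_compl, ← card_filter_preimage_eq_and_exists_eq s A hb, filter_filter]
    split_ifs with hs
    · congr 1; ext g; simp only [mem_filter, mem_univ, true_and]
      constructor
      · rintro ⟨⟨-, hit⟩, hg⟩; exact ⟨hg, hit⟩
      · rintro ⟨hg, hit⟩; exact ⟨⟨hg ▸ hs, hit⟩, hg⟩
    · rw [card_eq_zero, filter_eq_empty_iff]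
      rintro g - ⟨⟨hp, -⟩, hg⟩
      exact hs (hg ▸ hp)
  rw [card_eq_sum_card_fiberwise (f := fun g => ({i | g i ∈ A} : Finset ι)) (t := univ.powerset)
    (fun _ _ => by simp), Finset.sum_congr rfl fun s _ => hfiber s,
    sum_powerset_apply_card fun m => if p m then
      #A ^ m * (#Aᶜ ^ (Fintype.card ι - m) - (#Aᶜ - 1) ^ (Fintype.card ι - m)) else 0,
    card_univ, sum_filter]
  simp only [smul_eq_mul, mul_ite, mul_zero]

end

lemma binomial_term_div_pow {d m : ℕ} (hm : m ≤ d) {n : ℝ} (hn : n ≠ 0) (c x y : ℝ) :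
    c * ((n - x) ^ m * (x ^ (d - m) - y ^ (d - m))) / n ^ d =
      c * ((x / n) ^ (d - m) - (y / n) ^ (d - m)) * (1 - x / n) ^ m := by
  rw [one_sub_div hn, div_pow, div_pow, div_pow, ← Nat.sub_add_cancel hm, pow_add,
    Nat.add_sub_cancel]
  field_simp

theorem stmt_10_general (k d n x : ℕ) (hkd : k < d)
    (hx1 : 1 ≤ x) (hxn : x ≤ n) :
    ((Finset.univ.filter (fun g : Fin d → Fin n =>
        (Finset.univ.filter (fun i : Fin d => x ≤ (g i : ℕ))).card < k ∧
          ∃ i : Fin d, (g i : ℕ) = x - 1)).card : ℝ)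
      / (n : ℝ) ^ d =
    ∑ j ∈ Finset.Icc 1 k,
      (d.choose (d - k + j) : ℝ) *
        (((x : ℝ) / (n : ℝ)) ^ (d - k + j) - (((x : ℝ) - 1) / (n : ℝ)) ^ (d - k + j)) *
        (1 - (x : ℝ) / (n : ℝ)) ^ (k - j) := by
  set light : Finset (Fin n) := {b | x ≤ (b : ℕ)}
  have hbin : (⟨x - 1, by omega⟩ : Fin n) ∉ light := by simp [light]; omega
  have hheavy : #lightᶜ = x := by
    simp only [light, compl_filter, not_le, Fin.card_filter_val_lt, min_eq_right hxn]
  have hlight : #light = n - x := by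
    have := card_add_card_compl light
    rw [hheavy, Fintype.card_fin] at this
    omega
  have hcount : #{g : Fin d → Fin n | #{i | x ≤ (g i : ℕ)} < k ∧ ∃ i, (g i : ℕ) = x - 1} =
      ∑ m ∈ range k, d.choose m * ((n - x) ^ m * (x ^ (d - m) - (x - 1) ^ (d - m))) := by
    refine (congrArg card ?_).trans
      ((card_filter_card_preimage_and_exists_eq (· < k) light hbin).trans ?_)
    · ext g; simp [light, Fin.ext_iff]
    · rw [Fintype.card_fin, hlight, hheavy]
      congr 1; ext m; simp only [mem_filter, mem_range]; omega
  have hn : (n : ℝ) ≠ 0 := Nat.cast_ne_zero.mpr (by omega)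
  rw [hcount, Nat.cast_sum, sum_div]
  refine sum_nbij' (fun m => k - m) (fun j => k - j) (by simp; omega) (by simp; omega)
    (by simp; omega) (by simp; omega) fun m hm => ?_
  have hm : m < k := mem_range.mp hm
  rw [Nat.cast_mul, Nat.cast_mul, Nat.cast_sub (Nat.pow_le_pow_left (Nat.sub_le x 1) _)]
  push_cast [Nat.cast_sub hxn, Nat.cast_sub hx1]
  rw [binomial_term_div_pow (by omega) hn, show d - m = d - k + (k - m) by omega,
    Nat.sub_sub_self hm.le, Nat.choose_symm_of_eq_add]
  omega

/-- One round of the `(k,d)`-choice process: `d` bins are sampled i.u.r. with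
replacement (`g : Fin d → Fin n` uniform) and `k` balls go into the `k` least loaded
sampled bins.  Bins are indexed by load rank (index `x - 1` is the `x`-th most loaded
bin, light bins have index `≥ x`).  The `x`-th most loaded bin receives at least one
ball iff it is sampled and fewer than `k` samples hit light bins; this has probability
`∑_{j=1}^{k} C(d, d-k+j) ((x/n)^{d-k+j} - ((x-1)/n)^{d-k+j}) (1-x/n)^{k-j}`. -/
theorem stmt_10 (k d n x : ℕ) (hk : 1 ≤ k) (hkd : k < d) (hdn : d ≤ n)
    (hx1 : 1 ≤ x) (hxn : x ≤ n) :
    ((Finset.univ.filter (fun g : Fin d → Fin n =>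
        (Finset.univ.filter (fun i : Fin d => x ≤ (g i : ℕ))).card < k ∧
          ∃ i : Fin d, (g i : ℕ) = x - 1)).card : ℝ)
      / (n : ℝ) ^ d =
    ∑ j ∈ Finset.Icc 1 k,
      (d.choose (d - k + j) : ℝ) *
        (((x : ℝ) / (n : ℝ)) ^ (d - k + j) - (((x : ℝ) - 1) / (n : ℝ)) ^ (d - k + j)) *
        (1 - (x : ℝ) / (n : ℝ)) ^ (k - j) :=
  stmt_10_general k d n x hkd hx1 hxn
end

section
/- For integers 1 ≤ k < d ≤ n, the function p(x) = C(d, d-k+1)·(x/n)^{d-k}·(d-k+1)/n satisfies: p_x ≤ p(x) for all 1 ≤ x ≤ n, where p_x = ∑_{j=1}^{k} C(d,d-k+j)·((x/n)^{d-k+j}-((x-1)/n)^{d-k+j})·(1-x/n)^{k-j}. -/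
/-!
With `b = x/n` and `a = (x-1)/n`, the mean value bound `b^i - a^i ≤ i b^(i-1) (b - a)` and the
absorption identity `C(d,i) i = d C(d-1,i-1)` bound `p_x` by `d/n` times the upper binomial tail
`P(Bin(d-1, b) ≥ d-k)`, which the union bound caps at `C(d-1,d-k) b^(d-k)`.
-/

open Finset

section OrderedCommRing

variable {α : Type*} [CommRing α] [LinearOrder α] [IsOrderedRing α]

theorem pow_sub_pow_le_of_le {a b : α} (ha : 0 ≤ a) (hab : a ≤ b) (i : ℕ) :
    b ^ i - a ^ i ≤ (b - a) * i * b ^ (i - 1) := by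
  have hb : 0 ≤ b := ha.trans hab
  calc b ^ i - a ^ i ≤ |b ^ i - a ^ i| := le_abs_self _
    _ ≤ |b - a| * i * max |b| |a| ^ (i - 1) := abs_pow_sub_pow_le b a i
    _ = (b - a) * i * b ^ (i - 1) := by
      rw [abs_of_nonneg (sub_nonneg.2 hab), abs_of_nonneg ha, abs_of_nonneg hb, max_eq_left hab]

theorem choose_succ_mul_pow_sub_pow_le {a b : α} (ha : 0 ≤ a) (hab : a ≤ b) (N r : ℕ) :
    ((N + 1).choose (r + 1) : α) * (b ^ (r + 1) - a ^ (r + 1)) ≤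
      (N + 1) * (b - a) * (N.choose r * b ^ r) := by
  have absorb := congrArg (Nat.cast : ℕ → α) (Nat.add_one_mul_choose_eq N r)
  calc ((N + 1).choose (r + 1) : α) * (b ^ (r + 1) - a ^ (r + 1))
      ≤ (N + 1).choose (r + 1) * ((b - a) * (r + 1 : ℕ) * b ^ r) := by
        gcongr
        exact pow_sub_pow_le_of_le ha hab (r + 1)
    _ = (N + 1) * (b - a) * (N.choose r * b ^ r) := by
        push_cast at absorb ⊢
        linear_combination (b - a) * b ^ r * absorb.symm

/-- Union bound: having at least `s` successes among `N` trials of probability `t` requires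
some `s` given trials to all succeed. -/
theorem sum_Icc_choose_mul_pow_mul_one_sub_pow_le {t : α} (ht₀ : 0 ≤ t) (ht₁ : t ≤ 1)
    {s N : ℕ} (hsN : s ≤ N) :
    ∑ i ∈ Icc s N, (N.choose i : α) * (t ^ i * (1 - t) ^ (N - i)) ≤ N.choose s * t ^ s := by
  have h1t : 0 ≤ 1 - t := sub_nonneg.2 ht₁
  calc _ ≤ ∑ i ∈ Icc s N,
          (N.choose s * (N - s).choose (i - s) : ℕ) * (t ^ i * (1 - t) ^ (N - i)) := by
        refine sum_le_sum fun i hi => ?_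
        have hsi : s ≤ i := (mem_Icc.1 hi).1
        gcongr
        calc N.choose i ≤ N.choose i * i.choose s :=
              Nat.le_mul_of_pos_right _ (Nat.choose_pos hsi)
          _ = N.choose s * (N - s).choose (i - s) := Nat.choose_mul hsi
    _ = N.choose s * t ^ s * ∑ u ∈ range (N - s + 1),
          t ^ u * (1 - t) ^ (N - s - u) * ((N - s).choose u : α) := by
        rw [← Ico_add_one_right_eq_Icc, sum_Ico_eq_sum_range, mul_sum,
          Nat.sub_add_comm hsN]
        refine sum_congr rfl fun u _ => ?_
        rw [Nat.add_sub_cancel_left, Nat.sub_add_eq, pow_add]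
        push_cast
        ring
    _ = N.choose s * t ^ s := by rw [← add_pow, add_sub_cancel, one_pow, mul_one]

theorem sum_Icc_choose_succ_mul_pow_sub_pow_mul_le {a b : α} (ha : 0 ≤ a) (hab : a ≤ b)
    (hb₁ : b ≤ 1) {s N : ℕ} (hsN : s ≤ N) :
    ∑ r ∈ Icc s N,
        ((N + 1).choose (r + 1) : α) * (b ^ (r + 1) - a ^ (r + 1)) * (1 - b) ^ (N - r) ≤
      (N + 1) * (b - a) * (N.choose s * b ^ s) := by
  have hb : 0 ≤ b := ha.trans hab
  have h1b : 0 ≤ 1 - b := sub_nonneg.2 hb₁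
  calc _ ≤ ∑ r ∈ Icc s N, (N + 1) * (b - a) * (N.choose r * b ^ r) * (1 - b) ^ (N - r) := by
        refine sum_le_sum fun r _ => mul_le_mul_of_nonneg_right ?_ (pow_nonneg h1b _)
        exact choose_succ_mul_pow_sub_pow_le ha hab N r
    _ = (N + 1) * (b - a) * ∑ r ∈ Icc s N, (N.choose r : α) * (b ^ r * (1 - b) ^ (N - r)) := by
        rw [mul_sum]
        exact sum_congr rfl fun r _ => by ring
    _ ≤ (N + 1) * (b - a) * (N.choose s * b ^ s) := by
        have hc : (0 : α) ≤ (N + 1) * (b - a) :=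
          mul_nonneg (add_nonneg N.cast_nonneg zero_le_one) (sub_nonneg.2 hab)
        refine mul_le_mul_of_nonneg_left ?_ hc
        exact sum_Icc_choose_mul_pow_mul_one_sub_pow_le hb hb₁ hsN

end OrderedCommRing

theorem sum_Icc_one_eq_sum_Icc_shift {M : Type*} [AddCommMonoid M] (f : ℕ → ℕ → M)
    {k N : ℕ} (hk : k ≤ N + 1) :
    ∑ j ∈ Icc 1 k, f (N + 1 - k + j) (k - j) =
      ∑ r ∈ Icc (N + 1 - k) N, f (r + 1) (N - r) := by
  refine sum_nbij' (fun j => N + j - k) (fun r => r + k - N) ?_ ?_ ?_ ?_ ?_ <;>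
    intro i hi <;> simp only [mem_Icc] at hi ⊢
  · omega
  · omega
  · omega
  · omega
  · rw [show N + 1 - k + i = N + i - k + 1 by omega, show k - i = N - (N + i - k) by omega]

theorem stmt_11_general (k d n x : ℕ) (hk : 1 ≤ k) (hkd : k < d)
    (hx1 : 1 ≤ x) (hxn : x ≤ n) :
    ∑ j ∈ Finset.Icc 1 k,
        (d.choose (d - k + j) : ℝ) *
          (((x : ℝ) / (n : ℝ)) ^ (d - k + j) - (((x : ℝ) - 1) / (n : ℝ)) ^ (d - k + j)) *
          (1 - (x : ℝ) / (n : ℝ)) ^ (k - j) ≤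
      (d.choose (d - k + 1) : ℝ) * ((x : ℝ) / (n : ℝ)) ^ (d - k) *
        ((d : ℝ) - (k : ℝ) + 1) / (n : ℝ) := by
  obtain ⟨N, rfl⟩ : ∃ N, d = N + 1 := ⟨d - 1, by omega⟩
  have hn : (0 : ℝ) < n := Nat.cast_pos.2 (hx1.trans hxn)
  set b : ℝ := (x : ℝ) / n
  set a : ℝ := ((x : ℝ) - 1) / n
  have ha : 0 ≤ a := div_nonneg (by simpa using hx1) hn.le
  have hab : a ≤ b := div_le_div_of_nonneg_right (by linarith) hn.le
  have hb₁ : b ≤ 1 := (div_le_one hn).2 (by exact_mod_cast hxn)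
  have hba : b - a = 1 / n := by rw [← sub_div, sub_sub_cancel]
  have absorb := congrArg (Nat.cast : ℕ → ℝ) (Nat.add_one_mul_choose_eq N (N + 1 - k))
  refine (sum_Icc_one_eq_sum_Icc_shift
    (fun i m => ((N + 1).choose i : ℝ) * (b ^ i - a ^ i) * (1 - b) ^ m) hkd.le).trans_le ?_
  refine (sum_Icc_choose_succ_mul_pow_sub_pow_mul_le ha hab hb₁ (by omega)).trans_eq ?_
  rw [hba]
  push_cast [Nat.cast_sub hkd.le] at absorb ⊢
  field_simp
  linear_combination b ^ (N + 1 - k) * absorb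

/-- For `1 ≤ k < d ≤ n` and `1 ≤ x ≤ n`, the probability
`p_x = ∑_{j=1}^k C(d,d-k+j)((x/n)^{d-k+j} - ((x-1)/n)^{d-k+j})(1-x/n)^{k-j}`
is at most `C(d, d-k+1) (x/n)^{d-k} (d-k+1)/n`. -/
theorem stmt_11 (k d n x : ℕ) (hk : 1 ≤ k) (hkd : k < d) (hdn : d ≤ n)
    (hx1 : 1 ≤ x) (hxn : x ≤ n) :
    ∑ j ∈ Finset.Icc 1 k,
        (d.choose (d - k + j) : ℝ) *
          (((x : ℝ) / (n : ℝ)) ^ (d - k + j) - (((x : ℝ) - 1) / (n : ℝ)) ^ (d - k + j)) *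
          (1 - (x : ℝ) / (n : ℝ)) ^ (k - j) ≤
      (d.choose (d - k + 1) : ℝ) * ((x : ℝ) / (n : ℝ)) ^ (d - k) *
        ((d : ℝ) - (k : ℝ) + 1) / (n : ℝ) :=
  stmt_11_general k d n x hk hkd hx1 hxn
end
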